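/- Let V be a finite-dimensional real inner product space of dimension N, and let f : V → ℝ be positively homogeneous of degree α ≥ 1 and Lipschitz on the unit ball with Lipschitz constant L_f. Then there exists a constant C > 0 depending only on N and α such that for any Λ > 0 and any symmetric positive semidefinite operators A, B on V with ‖A‖ ≤ Λ and ‖B‖ ≤ Λ, the difference of Gaussian expectations satisfies |E_A(f) − E_B(f)| ≤ C L_f Λ^{(α−1)/2} ‖A − B‖^{1/2}. -/

import Mathlib

open MeasureTheory
open scoped RealInnerProductSpace

/-- The standard Gaussian measure on `ℝ^N`. -/
noncomputable def stdGaussian (N : ℕ) : Measure (EuclideanSpace ℝ (Fin N)) :=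
  volume.withDensity fun v =>
    ENNReal.ofReal (Real.exp (-‖v‖ ^ 2 / 2) / Real.sqrt ((2 * Real.pi) ^ N))

/-!
Homogeneity turns the Lipschitz bound on the unit ball into
`|f x - f y| ≤ L_f R^(α-1) ‖x - y‖` on the ball of radius `R`. Since `‖√A‖ = √‖A‖ ≤ √Λ` and
`‖√A - √B‖ ≤ √‖A - B‖`, taking `R = √Λ ‖v‖` bounds `|f (√A v) - f (√B v)|` by
`L_f Λ^((α-1)/2) ‖A - B‖^(1/2) ‖v‖^α`, and the Gaussian moment `∫ ‖v‖^α` is finite.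
The operator inequality is tested on eigenvectors of `√A - √B`: if `(√A - √B) e = μ e` with
`‖e‖ = 1`, then `μ² ≤ |μ| ⟪(√A + √B) e, e⟫ = |⟪(A - B) e, e⟫|`.
-/

theorem rpow_le_exp_sq_div_four_add_sq {r α : ℝ} (hr : 0 ≤ r) (hα : 0 ≤ α) :
    r ^ α ≤ Real.exp (r ^ 2 / 4 + α ^ 2) := by
  rcases hr.eq_or_lt with rfl | hr
  · exact (Real.zero_rpow_le_one α).trans (Real.one_le_exp (by positivity))
  rw [Real.rpow_def_of_pos hr, Real.exp_le_exp]
  -- `α log r ≤ α (r - 1)` and `α r ≤ r² / 4 + α²`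
  nlinarith [mul_le_mul_of_nonneg_left (Real.log_le_sub_one_of_pos hr) hα, sq_nonneg (r / 2 - α)]

theorem integrable_exp_neg_mul_sq_norm {V : Type*} [NormedAddCommGroup V] [InnerProductSpace ℝ V]
    [FiniteDimensional ℝ V] [MeasurableSpace V] [BorelSpace V] {b : ℝ} (hb : 0 < b) :
    Integrable fun v : V => Real.exp (-b * ‖v‖ ^ 2) := by
  have h := (GaussianFourier.integrable_cexp_neg_mul_sq_norm_add (V := V) (b := b)
    (by simpa using hb) 0 0).norm
  simpa [Complex.norm_exp, ← Complex.ofReal_pow] using h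

theorem integrable_rpow_norm_stdGaussian (N : ℕ) {α : ℝ} (hα : 0 ≤ α) :
    Integrable (fun v => ‖v‖ ^ α) (stdGaussian N) := by
  set c := Real.sqrt ((2 * Real.pi) ^ N)
  have hdensity : Measurable fun v : EuclideanSpace ℝ (Fin N) =>
      ENNReal.ofReal (Real.exp (-‖v‖ ^ 2 / 2) / c) := by fun_prop
  rw [stdGaussian, integrable_withDensity_iff hdensity (ae_of_all _ fun _ => ENNReal.ofReal_lt_top)]
  refine ((integrable_exp_neg_mul_sq_norm (b := 1 / 4) (by norm_num)).const_mul
    (Real.exp (α ^ 2) / c)).mono' (by fun_prop) (ae_of_all _ fun v => ?_)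
  rw [ENNReal.toReal_ofReal (by positivity), Real.norm_of_nonneg (by positivity)]
  calc ‖v‖ ^ α * (Real.exp (-‖v‖ ^ 2 / 2) / c)
      ≤ Real.exp (‖v‖ ^ 2 / 4 + α ^ 2) * (Real.exp (-‖v‖ ^ 2 / 2) / c) := by
        gcongr; exact rpow_le_exp_sq_div_four_add_sq (norm_nonneg v) hα
    _ = Real.exp (α ^ 2) / c * Real.exp (-(1 / 4) * ‖v‖ ^ 2) := by
        rw [mul_div_assoc', div_mul_eq_mul_div, ← Real.exp_add, ← Real.exp_add]
        ring_nf

section Homogeneous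

variable {E F : Type*} [NormedAddCommGroup E] [NormedSpace ℝ E] [NormedAddCommGroup F]
  [NormedSpace ℝ F] {f : F → ℝ} {α Lf : ℝ}

theorem lipschitz_const_nonneg_of_unitBall [Nontrivial F]
    (hLip : ∀ x y : F, ‖x‖ ≤ 1 → ‖y‖ ≤ 1 → |f x - f y| ≤ Lf * ‖x - y‖) : 0 ≤ Lf := by
  obtain ⟨x, hx⟩ := exists_norm_eq F zero_le_one
  simpa [hx] using (abs_nonneg _).trans (hLip x 0 hx.le (by simp))

theorem map_zero_of_homogeneous (hα : 0 < α)
    (hhom : ∀ t : ℝ, 0 < t → ∀ v, f (t • v) = t ^ α * f v) : f 0 = 0 := by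
  have h := hhom 2 two_pos 0
  rw [smul_zero] at h
  nlinarith [Real.one_lt_rpow one_lt_two hα]

theorem abs_sub_le_of_homogeneous (hhom : ∀ t : ℝ, 0 < t → ∀ v, f (t • v) = t ^ α * f v)
    (hLip : ∀ x y : F, ‖x‖ ≤ 1 → ‖y‖ ≤ 1 → |f x - f y| ≤ Lf * ‖x - y‖)
    {R : ℝ} (hR : 0 < R) {x y : F} (hx : ‖x‖ ≤ R) (hy : ‖y‖ ≤ R) :
    |f x - f y| ≤ Lf * R ^ (α - 1) * ‖x - y‖ := by
  have hscale : ∀ z, f z = R ^ α * f (R⁻¹ • z) := fun z => by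
    rw [← hhom R hR, smul_inv_smul₀ hR.ne']
  have hball : ∀ z : F, ‖z‖ ≤ R → ‖R⁻¹ • z‖ ≤ 1 := fun z hz => by
    rw [norm_smul, Real.norm_of_nonneg (inv_nonneg.2 hR.le), inv_mul_le_one₀ hR]
    exact hz
  calc |f x - f y| = R ^ α * |f (R⁻¹ • x) - f (R⁻¹ • y)| := by
        rw [hscale x, hscale y, ← mul_sub, abs_mul, abs_of_pos (Real.rpow_pos_of_pos hR α)]
    _ ≤ R ^ α * (Lf * ‖R⁻¹ • x - R⁻¹ • y‖) := by
        gcongr; exact hLip _ _ (hball x hx) (hball y hy)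
    _ = Lf * R ^ (α - 1) * ‖x - y‖ := by
        rw [← smul_sub, norm_smul, Real.norm_of_nonneg (inv_nonneg.2 hR.le),
          Real.rpow_sub_one hR.ne']
        field_simp

theorem continuous_of_homogeneous (hhom : ∀ t : ℝ, 0 < t → ∀ v, f (t • v) = t ^ α * f v)
    (hLip : ∀ x y : F, ‖x‖ ≤ 1 → ‖y‖ ≤ 1 → |f x - f y| ≤ Lf * ‖x - y‖) : Continuous f := by
  refine continuous_iff_continuousAt.2 fun p => continuousAt_of_locally_lipschitz one_pos
    (Lf * (‖p‖ + 1) ^ (α - 1)) fun x hx => ?_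
  rw [dist_eq_norm] at hx
  have hxp : ‖x‖ ≤ ‖p‖ + 1 := by linarith [norm_le_norm_add_norm_sub' x p]
  rw [Real.dist_eq, dist_eq_norm]
  exact abs_sub_le_of_homogeneous hhom hLip (by positivity) hxp (by linarith)

theorem abs_sub_comp_le_of_homogeneous (hhom : ∀ t : ℝ, 0 < t → ∀ v, f (t • v) = t ^ α * f v)
    (hLip : ∀ x y : F, ‖x‖ ≤ 1 → ‖y‖ ≤ 1 → |f x - f y| ≤ Lf * ‖x - y‖) (hLf : 0 ≤ Lf)
    {S T : E →L[ℝ] F} {s : ℝ} (hS : ‖S‖ ≤ s) (hT : ‖T‖ ≤ s) (v : E) :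
    |f (S v) - f (T v)| ≤ Lf * s ^ (α - 1) * ‖S - T‖ * ‖v‖ ^ α := by
  have hs : 0 ≤ s := (norm_nonneg S).trans hS
  have hSv := S.le_of_opNorm_le hS v
  have hTv := T.le_of_opNorm_le hT v
  rcases (mul_nonneg hs (norm_nonneg v)).eq_or_lt with h0 | hpos
  · rw [norm_le_zero_iff.1 (hSv.trans h0.ge), norm_le_zero_iff.1 (hTv.trans h0.ge), sub_self,
      abs_zero]
    positivity
  have hv : 0 < ‖v‖ := pos_of_mul_pos_right hpos hs
  calc |f (S v) - f (T v)| ≤ Lf * (s * ‖v‖) ^ (α - 1) * ‖S v - T v‖ :=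
        abs_sub_le_of_homogeneous hhom hLip hpos hSv hTv
    _ ≤ Lf * (s * ‖v‖) ^ (α - 1) * (‖S - T‖ * ‖v‖) := by
        gcongr; exact (S - T).le_opNorm v
    _ = Lf * s ^ (α - 1) * ‖S - T‖ * ‖v‖ ^ α := by
        rw [Real.mul_rpow hs hv.le, Real.rpow_sub_one hv.ne']
        field_simp

variable [MeasurableSpace E] [BorelSpace E] {μ : Measure E}

theorem integrable_comp_of_homogeneous (hα : 0 < α)
    (hhom : ∀ t : ℝ, 0 < t → ∀ v, f (t • v) = t ^ α * f v)
    (hLip : ∀ x y : F, ‖x‖ ≤ 1 → ‖y‖ ≤ 1 → |f x - f y| ≤ Lf * ‖x - y‖) (hLf : 0 ≤ Lf)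
    (hint : Integrable (fun v => ‖v‖ ^ α) μ) (S : E →L[ℝ] F) :
    Integrable (fun v => f (S v)) μ := by
  refine (hint.const_mul (Lf * ‖S‖ ^ (α - 1) * ‖S‖)).mono'
    ((continuous_of_homogeneous hhom hLip).comp S.continuous).aestronglyMeasurable
    (ae_of_all _ fun v => ?_)
  have h := abs_sub_comp_le_of_homogeneous hhom hLip hLf le_rfl (T := 0)
    ((norm_zero (E := E →L[ℝ] F)).trans_le (norm_nonneg S)) v
  rwa [zero_apply, map_zero_of_homogeneous hα hhom, sub_zero, sub_zero,
    ← Real.norm_eq_abs] at h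

theorem abs_integral_comp_sub_le_of_homogeneous (hα : 0 < α)
    (hhom : ∀ t : ℝ, 0 < t → ∀ v, f (t • v) = t ^ α * f v)
    (hLip : ∀ x y : F, ‖x‖ ≤ 1 → ‖y‖ ≤ 1 → |f x - f y| ≤ Lf * ‖x - y‖) (hLf : 0 ≤ Lf)
    (hint : Integrable (fun v => ‖v‖ ^ α) μ) {S T : E →L[ℝ] F} {s : ℝ} (hS : ‖S‖ ≤ s)
    (hT : ‖T‖ ≤ s) :
    |∫ v, f (S v) ∂μ - ∫ v, f (T v) ∂μ| ≤ Lf * s ^ (α - 1) * ‖S - T‖ * ∫ v, ‖v‖ ^ α ∂μ := by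
  have hSi := integrable_comp_of_homogeneous hα hhom hLip hLf hint S
  have hTi := integrable_comp_of_homogeneous hα hhom hLip hLf hint T
  rw [← integral_sub hSi hTi, ← integral_const_mul]
  exact abs_integral_le_integral_abs.trans <| integral_mono (hSi.sub hTi).abs (hint.const_mul _)
    (abs_sub_comp_le_of_homogeneous hhom hLip hLf hS hT)

end Homogeneous

section SquareRoot

variable {E : Type*} [NormedAddCommGroup E] [InnerProductSpace ℝ E]

theorem LinearMap.IsSymmetric.norm_apply_sq_le [FiniteDimensional ℝ E] {T : E →ₗ[ℝ] E}
    (hT : T.IsSymmetric) {K : ℝ} (hK : ∀ i, hT.eigenvalues rfl i ^ 2 ≤ K) (v : E) :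
    ‖T v‖ ^ 2 ≤ K * ‖v‖ ^ 2 := by
  set b := hT.eigenvectorBasis rfl
  rw [← b.sum_sq_norm_inner_right, ← b.sum_sq_norm_inner_right, Finset.mul_sum]
  gcongr with i
  rw [← b.repr_apply_apply, ← b.repr_apply_apply, hT.eigenvectorBasis_apply_self_apply,
    norm_mul, mul_pow]
  gcongr
  simpa using hK i

variable [CompleteSpace E] {sA sB : E →L[ℝ] E}

theorem sq_le_norm_mul_self_sub_of_eigenvector (hsA : IsSelfAdjoint sA) (hsB : IsSelfAdjoint sB)
    (hsA₀ : ∀ v, 0 ≤ ⟪sA v, v⟫) (hsB₀ : ∀ v, 0 ≤ ⟪sB v, v⟫) {e : E} (he : ‖e‖ = 1) {μ : ℝ}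
    (heig : sA e - sB e = μ • e) : μ ^ 2 ≤ ‖sA ∘L sA - sB ∘L sB‖ := by
  have hμ : μ = ⟪sA e, e⟫ - ⟪sB e, e⟫ := by
    rw [← inner_sub_left, heig, real_inner_smul_left, real_inner_self_eq_norm_sq, he]
    ring
  have hquad : ⟪(sA ∘L sA - sB ∘L sB) e, e⟫ = μ * (⟪sA e, e⟫ + ⟪sB e, e⟫) := by
    have hA : ⟪sA (sA e), e⟫ = ⟪sA e, sA e⟫ := hsA.isSymmetric (sA e) e
    have hB : ⟪sB (sB e), e⟫ = ⟪sB e, sB e⟫ := hsB.isSymmetric (sB e) e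
    have hdiff : ⟪sA e, sA e⟫ - ⟪sB e, sB e⟫ = ⟪sA e - sB e, sA e + sB e⟫ := by
      rw [inner_sub_left, inner_add_right, inner_add_right, real_inner_comm (sA e) (sB e)]
      ring
    rw [sub_apply, ContinuousLinearMap.comp_apply, ContinuousLinearMap.comp_apply,
      inner_sub_left, hA, hB, hdiff, heig, real_inner_smul_left, inner_add_right,
      real_inner_comm (sA e) e, real_inner_comm (sB e) e]
  calc μ ^ 2 = |μ| * |⟪sA e, e⟫ - ⟪sB e, e⟫| := by rw [← hμ, abs_mul_abs_self, sq]
    _ ≤ |μ| * (⟪sA e, e⟫ + ⟪sB e, e⟫) := by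
        gcongr
        exact abs_sub_le_iff.2 ⟨by linarith [hsB₀ e], by linarith [hsA₀ e]⟩
    _ = |⟪(sA ∘L sA - sB ∘L sB) e, e⟫| := by
        rw [hquad, abs_mul, abs_of_nonneg (add_nonneg (hsA₀ e) (hsB₀ e))]
    _ ≤ ‖sA ∘L sA - sB ∘L sB‖ := by
        simpa [he] using abs_real_inner_le_norm ((sA ∘L sA - sB ∘L sB) e) e |>.trans
          (mul_le_mul_of_nonneg_right ((sA ∘L sA - sB ∘L sB).le_opNorm e) (norm_nonneg e))

theorem norm_sub_le_sqrt_norm_mul_self_sub [FiniteDimensional ℝ E] (hsA : IsSelfAdjoint sA)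
    (hsB : IsSelfAdjoint sB) (hsA₀ : ∀ v, 0 ≤ ⟪sA v, v⟫) (hsB₀ : ∀ v, 0 ≤ ⟪sB v, v⟫) :
    ‖sA - sB‖ ≤ √‖sA ∘L sA - sB ∘L sB‖ := by
  have hD := (hsA.sub hsB).isSymmetric
  refine ContinuousLinearMap.opNorm_le_bound _ (Real.sqrt_nonneg _) fun v => ?_
  rw [← Real.sqrt_sq (norm_nonneg v), ← Real.sqrt_mul (norm_nonneg _)]
  refine (le_abs_self _).trans (Real.abs_le_sqrt (hD.norm_apply_sq_le (fun i => ?_) v))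
  refine sq_le_norm_mul_self_sub_of_eigenvector hsA hsB hsA₀ hsB₀
    ((hD.eigenvectorBasis rfl).orthonormal.1 i) ?_
  simpa using hD.apply_eigenvectorBasis rfl i

end SquareRoot

/-- For `f : ℝ^N → ℝ` positively homogeneous of degree `α ≥ 1` and Lipschitz (with constant
`L_f`) on the unit ball, there is `C > 0` depending only on `N` and `α` such that for all
`Λ > 0` and symmetric positive semidefinite `A, B` with `‖A‖, ‖B‖ ≤ Λ` one has
`|E_A(f) - E_B(f)| ≤ C L_f Λ^{(α-1)/2} ‖A - B‖^{1/2}`, where `E_A(f)` is the integral of `f`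
against the centered Gaussian with covariance `A` (the pushforward of the standard Gaussian
under `√A`). -/
theorem gaussian_expectation_holder (N : ℕ) (α : ℝ) (hα : 1 ≤ α) :
    ∃ C > (0 : ℝ), ∀ (f : EuclideanSpace ℝ (Fin N) → ℝ) (Lf : ℝ),
      (∀ t : ℝ, 0 < t → ∀ v, f (t • v) = t ^ α * f v) →
      (∀ x y : EuclideanSpace ℝ (Fin N), ‖x‖ ≤ 1 → ‖y‖ ≤ 1 → |f x - f y| ≤ Lf * ‖x - y‖) →
      ∀ Λ : ℝ, 0 < Λ →
      ∀ A B sA sB : EuclideanSpace ℝ (Fin N) →L[ℝ] EuclideanSpace ℝ (Fin N),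
        IsSelfAdjoint A → IsSelfAdjoint B → IsSelfAdjoint sA → IsSelfAdjoint sB →
        (∀ v, 0 ≤ ⟪sA v, v⟫) → (∀ v, 0 ≤ ⟪sB v, v⟫) →
        sA ∘L sA = A → sB ∘L sB = B → ‖A‖ ≤ Λ → ‖B‖ ≤ Λ →
        |(∫ v, f (sA v) ∂(stdGaussian N)) - ∫ v, f (sB v) ∂(stdGaussian N)|
          ≤ C * Lf * Λ ^ ((α - 1) / 2) * ‖A - B‖ ^ ((1 : ℝ) / 2) := by
  have hα₀ : 0 < α := by linarith
  set M := ∫ v, ‖v‖ ^ α ∂(stdGaussian N)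
  have hM : 0 ≤ M := integral_nonneg fun v => by positivity
  refine ⟨M + 1, by positivity, fun f Lf hhom hLip Λ hΛ A B sA sB _ _ hsA hsB hsA₀ hsB₀ hA hB
    hAΛ hBΛ => ?_⟩
  rcases subsingleton_or_nontrivial (EuclideanSpace ℝ (Fin N)) with hE | hE
  · simp [Subsingleton.elim sA sB, Subsingleton.elim A B]
  subst hA hB
  have hLf := lipschitz_const_nonneg_of_unitBall hLip
  have hnorm : ∀ {s : EuclideanSpace ℝ (Fin N) →L[ℝ] EuclideanSpace ℝ (Fin N)},
      IsSelfAdjoint s → ‖s ∘L s‖ ≤ Λ → ‖s‖ ≤ √Λ := fun hs hsΛ =>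
    Real.le_sqrt_of_sq_le (by rw [← hs.norm_mul_self]; exact hsΛ)
  have hΛpow : √Λ ^ (α - 1) = Λ ^ ((α - 1) / 2) := by
    rw [Real.sqrt_eq_rpow, ← Real.rpow_mul hΛ.le, one_div_mul_eq_div]
  calc _ ≤ Lf * √Λ ^ (α - 1) * ‖sA - sB‖ * M :=
        abs_integral_comp_sub_le_of_homogeneous hα₀ hhom hLip hLf
          (integrable_rpow_norm_stdGaussian N hα₀.le) (hnorm hsA hAΛ) (hnorm hsB hBΛ)
    _ ≤ Lf * Λ ^ ((α - 1) / 2) * ‖sA ∘L sA - sB ∘L sB‖ ^ ((1 : ℝ) / 2) * (M + 1) := by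
        rw [hΛpow, ← Real.sqrt_eq_rpow]
        gcongr
        · exact norm_sub_le_sqrt_norm_mul_self_sub hsA hsB hsA₀ hsB₀
        · linarith
    _ = _ := by ring
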